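/- arXiv:1604.01434 — 5 statements merged into one kernel-verified Lean document; each statement's English description precedes it below -/
import Mathlib

section
/- Verdú–Han Lemma for compound channels: Let S be a nonempty set, A and B nonempty finite types, W_s : A → PMF(B) a channel for every s ∈ S, n ≥ 1, M ≥ 1, and γ > 0. Let u : Fin M → A be any injective family of codewords and, for each s ∈ S, let D_{1,s}, …, D_{M,s} ⊆ B be pairwise disjoint decision regions, with average error probability ε_s := (1/M)·Σ_{k=1}^M W_s(u_k)(B \ D_{k,s}). Let p ∈ PMF(A) be the uniform distribution on the set of codewords {u_1, …, u_M}, and let i_s be the information density with respect to p and W_s. Then sup_{s∈S} ε_s ≥ sup_{s∈S} P_{(X,Y)∼p⊗W_s}( (1/n)·i_s(X,Y) ≤ (ln M)/n − γ ) − exp(−γ·n). -/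
/-!
Fix a state `s` and write `q` for the output law. On the event `i_s(x, y) ≤ ln M - γn` the
definition of `i_s` gives `W_s(x)(y) ≤ M e^{-γn} q(y)`. Split that event according to whether `y`
lies in the decision region of the codeword `x`: the pairs outside it have total mass at most
`ε_s`, and since the decision regions are disjoint, the pairs inside have mass at most
`(1/M) · Σ_y M e^{-γn} q(y) = e^{-γn}`.
-/

open Filter MeasureTheory
open scoped ENNReal

noncomputable section

/-- The output distribution `q_s(y) = Σ_x p(x)·W_s(x)(y)` of channel `Wₛ` under input `p`. -/
def outDist {A B : Type*} [Fintype A] (p : PMF A) (Wₛ : A → PMF B) (y : B) : ℝ≥0∞ :=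
  ∑ x : A, p x * Wₛ x y

/-- The information density `i_s(x,y) = ln(W_s(x)(y)/q_s(y))` (natural logarithm). -/
def infoDens {A B : Type*} [Fintype A] (p : PMF A) (Wₛ : A → PMF B) (x : A) (y : B) : ℝ :=
  Real.log ((Wₛ x y).toReal / (outDist p Wₛ y).toReal)

/-- The probability, under the joint law of `(X,Y) ∼ p ⊗ Wₛ`, that the normalized
information density satisfies `(1/n)·i_s(X,Y) ≤ r`. -/
def probInfoLE {A B : Type*} [Fintype A] [Fintype B] (p : PMF A) (Wₛ : A → PMF B)
    (n : ℕ) (r : ℝ) : ℝ≥0∞ :=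
  ∑ z : A × B,
    {z' : A × B | (1 / (n : ℝ)) * infoDens p Wₛ z'.1 z'.2 ≤ r}.indicator
      (fun z' => p z'.1 * Wₛ z'.1 z'.2) z

/-- The error probability `W_s(u)(B \ D)` of codeword `u` with decision region `D`. -/
def errProb {A B : Type*} [Fintype B] (Wₛ : A → PMF B) (u : A) (D : Set B) : ℝ≥0∞ :=
  ∑ y : B, Dᶜ.indicator (fun y' => Wₛ u y') y

open Finset

section InformationDensity

variable {A B : Type*} [Fintype A] (p : PMF A) (W : A → PMF B)

lemma outDist_eq_bind (y : B) : outDist p W y = p.bind W y := by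
  rw [PMF.bind_apply, tsum_fintype]
  rfl

lemma sum_outDist [Fintype B] : ∑ y, outDist p W y = 1 := by
  simp_rw [outDist_eq_bind]
  rw [← tsum_fintype (L := .unconditional _)]
  exact (p.bind W).tsum_coe

lemma apply_le_exp_mul_outDist_of_infoDens_le {x : A} {y : B} {t : ℝ} (hx : p x ≠ 0)
    (h : infoDens p W x y ≤ t) : W x y ≤ ENNReal.ofReal (Real.exp t) * outDist p W y := by
  rcases eq_or_ne (W x y) 0 with hW | hW
  · simp [hW]
  have hq : outDist p W y ≠ 0 :=
    (ENNReal.mul_pos hx hW).trans_le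
      (single_le_sum (f := fun x' => p x' * W x' y) (fun _ _ => zero_le) (mem_univ x)) |>.ne'
  have hq_top : outDist p W y ≠ ⊤ := by
    rw [outDist_eq_bind]
    exact PMF.apply_ne_top _ y
  have hW_top : W x y ≠ ⊤ := PMF.apply_ne_top _ y
  have hq_pos : 0 < (outDist p W y).toReal := ENNReal.toReal_pos hq hq_top
  have hratio : (W x y).toReal / (outDist p W y).toReal ≤ Real.exp t :=
    (Real.log_le_iff_le_exp (div_pos (ENNReal.toReal_pos hW hW_top) hq_pos)).1 h
  rw [div_le_iff₀ hq_pos] at hratio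
  rw [← ENNReal.toReal_le_toReal hW_top (ENNReal.mul_ne_top ENNReal.ofReal_ne_top hq_top),
    ENNReal.toReal_mul, ENNReal.toReal_ofReal (Real.exp_pos t).le]
  exact hratio

lemma probInfoLE_eq_sum_mul [Fintype B] (n : ℕ) (r : ℝ) :
    probInfoLE p W n r =
      ∑ x, p x * ∑ y, {y | 1 / (n : ℝ) * infoDens p W x y ≤ r}.indicator (W x) y := by
  rw [probInfoLE, Fintype.sum_prod_type]
  refine sum_congr rfl fun x _ => ?_
  rw [mul_sum]
  refine sum_congr rfl fun y _ => ?_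
  by_cases h : 1 / (n : ℝ) * infoDens p W x y ≤ r <;> simp [Set.indicator]

end InformationDensity

lemma PMF.sum_uniformOfFinset_mul {α : Type*} [Fintype α] (s : Finset α) (hs : s.Nonempty)
    (g : α → ℝ≥0∞) :
    ∑ x, PMF.uniformOfFinset s hs x * g x = (#s : ℝ≥0∞)⁻¹ * ∑ x ∈ s, g x := by
  rw [mul_sum, ← sum_subset (subset_univ s) fun x _ hx => by
    rw [PMF.uniformOfFinset_apply_of_notMem hs hx, zero_mul]]
  exact sum_congr rfl fun x hx => by rw [PMF.uniformOfFinset_apply_of_mem hs hx]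

lemma sum_sum_indicator_le_of_pairwise_disjoint {ι β : Type*} [Fintype ι] [Fintype β]
    {D : ι → Set β} (hD : Pairwise fun k l => Disjoint (D k) (D l)) (f : β → ℝ≥0∞) :
    ∑ k, ∑ y, (D k).indicator f y ≤ ∑ y, f y := by
  rw [sum_comm]
  gcongr with y
  rw [← indicator_biUnion_apply _ _ (hD.set_pairwise _)]
  exact Set.indicator_le_self _ _ _

lemma le_sub_mul_of_one_div_mul_le_div_sub {n i a γ : ℝ} (hn : 0 < n)
    (h : 1 / n * i ≤ a / n - γ) : i ≤ a - γ * n := by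
  have := mul_le_mul_of_nonneg_right h hn.le
  field_simp at this
  linarith

theorem probInfoLE_uniformOfFinset_le_avg_errProb_add_exp {A B : Type*} [Fintype A]
    [DecidableEq A] [Fintype B] (W : A → PMF B) {n M : ℕ} (hn : 1 ≤ n) (γ : ℝ)
    {u : Fin M → A} (hu : Function.Injective u) (hs : (univ.image u).Nonempty)
    {D : Fin M → Set B} (hD : Pairwise fun k l => Disjoint (D k) (D l)) :
    probInfoLE (PMF.uniformOfFinset _ hs) W n (Real.log M / n - γ)
      ≤ (M : ℝ≥0∞)⁻¹ * ∑ k, errProb W (u k) (D k) + ENNReal.ofReal (Real.exp (-(γ * n))) := by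
  set p := PMF.uniformOfFinset _ hs
  set E := ENNReal.ofReal (Real.exp (-(γ * n)))
  set L : A → Set B := fun x => {y | 1 / (n : ℝ) * infoDens p W x y ≤ Real.log M / n - γ}
  have hM : (0 : ℝ) < M := by
    obtain ⟨_, hx⟩ := hs
    obtain ⟨k, -, -⟩ := mem_image.1 hx
    exact_mod_cast k.pos
  have hcard : #(univ.image u) = M := by
    rw [card_image_of_injective _ hu, card_univ, Fintype.card_fin]
  have hpu : ∀ k, p (u k) ≠ 0 := fun k =>
    (PMF.mem_support_iff _ _).1 ((PMF.mem_support_uniformOfFinset_iff hs _).2 (mem_image_of_mem u (mem_univ k)))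
  have hME : ENNReal.ofReal (Real.exp (Real.log M - γ * n)) = M * E := by
    rw [sub_eq_add_neg, Real.exp_add, Real.exp_log hM, ENNReal.ofReal_mul hM.le,
      ENNReal.ofReal_natCast]
  have hsplit : ∀ k y, (L (u k)).indicator (W (u k)) y
      ≤ (D k)ᶜ.indicator (W (u k)) y + (D k).indicator (fun y => M * E * outDist p W y) y := by
    intro k y
    by_cases hy : y ∈ D k
    · rw [Set.indicator_of_notMem (Set.notMem_compl_iff.2 hy), Set.indicator_of_mem hy, zero_add]
      refine Set.indicator_apply_le' (fun h => ?_) (fun _ => zero_le)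
      rw [← hME]
      exact apply_le_exp_mul_outDist_of_infoDens_le p W (hpu k)
        (le_sub_mul_of_one_div_mul_le_div_sub (by exact_mod_cast hn) h)
    · rw [Set.indicator_of_mem (Set.mem_compl hy), Set.indicator_of_notMem hy, add_zero]
      exact Set.indicator_le_self _ _ _
  calc probInfoLE p W n (Real.log M / n - γ)
      = (M : ℝ≥0∞)⁻¹ * ∑ k, ∑ y, (L (u k)).indicator (W (u k)) y := by
        rw [probInfoLE_eq_sum_mul, PMF.sum_uniformOfFinset_mul, hcard, sum_image hu.injOn]
    _ ≤ (M : ℝ≥0∞)⁻¹ * ∑ k, (errProb W (u k) (D k)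
          + ∑ y, (D k).indicator (fun y => M * E * outDist p W y) y) := by
        gcongr with k
        rw [errProb, ← sum_add_distrib]
        exact sum_le_sum fun y _ => hsplit k y
    _ ≤ (M : ℝ≥0∞)⁻¹ * (∑ k, errProb W (u k) (D k) + ∑ y, M * E * outDist p W y) := by
        rw [sum_add_distrib]
        gcongr
        exact sum_sum_indicator_le_of_pairwise_disjoint hD _
    _ = (M : ℝ≥0∞)⁻¹ * ∑ k, errProb W (u k) (D k) + E := by
        rw [mul_add, ← mul_sum, sum_outDist, mul_one, ← mul_assoc,
          ENNReal.inv_mul_cancel (by exact_mod_cast hM.ne') (ENNReal.natCast_ne_top M), one_mul]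

theorem verdu_han_compound_general {S A B : Type*} [Fintype A]
    [DecidableEq A] [Fintype B] (W : S → A → PMF B)
    (n M : ℕ) (hn : 1 ≤ n) (hM : 1 ≤ M) (γ : ℝ)
    (u : Fin M → A) (hu : Function.Injective u)
    (D : S → Fin M → Set B)
    (hD : ∀ s : S, Pairwise fun k l => Disjoint (D s k) (D s l))
    (p : PMF A)
    (hp : p = PMF.uniformOfFinset (Finset.univ.image u)
      ⟨u ⟨0, hM⟩, Finset.mem_image_of_mem u (Finset.mem_univ _)⟩) :
    (⨆ s : S, probInfoLE p (W s) n (Real.log M / n - γ))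
        - ENNReal.ofReal (Real.exp (-(γ * n)))
      ≤ ⨆ s : S, (M : ℝ≥0∞)⁻¹ * ∑ k : Fin M, errProb (W s) (u k) (D s k) := by
  subst hp
  rw [tsub_le_iff_right]
  refine iSup_le fun s =>
    (probInfoLE_uniformOfFinset_le_avg_errProb_add_exp (W s) hn γ hu _ (hD s)).trans ?_
  gcongr
  exact le_iSup (fun s => (M : ℝ≥0∞)⁻¹ * ∑ k : Fin M, errProb (W s) (u k) (D s k)) s

/-- Verdú–Han Lemma for compound channels: for any code with injective
codewords `u : Fin M → A` and pairwise disjoint decision regions `D_{k,s}`, with `p` the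
uniform distribution on the set of codewords and average error probabilities `ε_s`,
`sup_s ε_s ≥ sup_s P((1/n)·i_s(X,Y) ≤ (ln M)/n − γ) − exp(−γn)`. -/
theorem verdu_han_compound {S A B : Type*} [Nonempty S] [Fintype A] [Nonempty A]
    [DecidableEq A] [Fintype B] [Nonempty B] (W : S → A → PMF B)
    (n M : ℕ) (hn : 1 ≤ n) (hM : 1 ≤ M) (γ : ℝ) (hγ : 0 < γ)
    (u : Fin M → A) (hu : Function.Injective u)
    (D : S → Fin M → Set B)
    (hD : ∀ s : S, Pairwise fun k l => Disjoint (D s k) (D s l))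
    (p : PMF A)
    (hp : p = PMF.uniformOfFinset (Finset.univ.image u)
      ⟨u ⟨0, hM⟩, Finset.mem_image_of_mem u (Finset.mem_univ _)⟩) :
    (⨆ s : S, probInfoLE p (W s) n (Real.log M / n - γ))
        - ENNReal.ofReal (Real.exp (-(γ * n)))
      ≤ ⨆ s : S, (M : ℝ≥0∞)⁻¹ * ∑ k : Fin M, errProb (W s) (u k) (D s k) :=
  verdu_han_compound_general W n M hn hM γ u hu D hD p hp

end
end

section
/- Let S be a nonempty compact topological space and, for each integer n ≥ 1, let f_n : S → ℝ satisfy 0 ≤ f_n(s) ≤ 1 for all s ∈ S. Assume: (i) each f_n is upper semicontinuous on S; (ii) the sequence (f_n) is weakly decreasing, i.e. there exist reals δ_m ≥ 0 with δ_m → 0 as m → ∞ such that f_n(s) ≤ f_m(s) + δ_m for all n ≥ m and all s ∈ S; (iii) f_n(s) → 0 as n → ∞ for every s ∈ S. Then lim_{n→∞} sup_{s∈S} f_n(s) = 0. -/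
open Filter

/-- if `S` is a nonempty compact space and `f_n : S → [0,1]` are upper
semicontinuous, weakly decreasing (`f_n(s) ≤ f_m(s) + δ_m` for `n ≥ m` with `δ_m → 0`,
`δ_m ≥ 0`), and pointwise convergent to `0`, then `sup_{s∈S} f_n(s) → 0`. -/
theorem sup_tendsto_zero_of_usc_weakly_decreasing {S : Type*} [TopologicalSpace S]
    [CompactSpace S] [Nonempty S] (f : ℕ → S → ℝ)
    (hf0 : ∀ n s, 0 ≤ f n s) (hf1 : ∀ n s, f n s ≤ 1)
    (husc : ∀ n, UpperSemicontinuous (f n))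
    (hwd : ∃ δ : ℕ → ℝ, (∀ m, 0 ≤ δ m) ∧ Tendsto δ atTop (nhds 0) ∧
      ∀ m n : ℕ, m ≤ n → ∀ s, f n s ≤ f m s + δ m)
    (hpt : ∀ s, Tendsto (fun n => f n s) atTop (nhds 0)) :
    Tendsto (fun n => ⨆ s : S, f n s) atTop (nhds 0) := by
  obtain ⟨δ, hδ0, hδto, hδ⟩ := hwd
  have hbdd : ∀ n, BddAbove (Set.range (f n)) := fun n =>
    ⟨1, by rintro x ⟨s, rfl⟩; exact hf1 n s⟩
  have hsup0 : ∀ n, 0 ≤ ⨆ s : S, f n s := fun n => by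
    obtain ⟨s⟩ := ‹Nonempty S›
    exact le_trans (hf0 n s) (le_ciSup (hbdd n) s)
  rw [Metric.tendsto_atTop]
  intro ε hε
  set U : ℕ → Set S := fun m => if δ m < ε / 4 then f m ⁻¹' Set.Iio (ε / 4) else ∅ with hU
  have hUopen : ∀ m, IsOpen (U m) := by
    intro m
    by_cases h : δ m < ε / 4
    · simp only [hU, if_pos h]
      exact (husc m).isOpen_preimage _
    · simp only [hU, if_neg h]
      exact isOpen_empty
  have hcover : Set.univ ⊆ ⋃ m, U m := by
    intro s _
    obtain ⟨N1, h1⟩ := Metric.tendsto_atTop.1 (hpt s) (ε / 4) (by linarith)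
    obtain ⟨N2, h2⟩ := Metric.tendsto_atTop.1 hδto (ε / 4) (by linarith)
    have hd : δ (max N1 N2) < ε / 4 := by
      have := h2 (max N1 N2) (le_max_right _ _)
      rwa [Real.dist_eq, sub_zero, abs_of_nonneg (hδ0 _)] at this
    have hfv : f (max N1 N2) s < ε / 4 := by
      have := h1 (max N1 N2) (le_max_left _ _)
      rwa [Real.dist_eq, sub_zero, abs_of_nonneg (hf0 _ _)] at this
    refine Set.mem_iUnion.2 ⟨max N1 N2, ?_⟩
    simp only [hU, if_pos hd]
    exact hfv
  obtain ⟨t, ht⟩ := isCompact_univ.elim_finite_subcover U hUopen hcover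
  refine ⟨t.sup id, fun n hn => ?_⟩
  rw [Real.dist_eq, sub_zero, abs_of_nonneg (hsup0 n)]
  have hbound : ∀ s, f n s ≤ ε / 2 := by
    intro s
    obtain ⟨m, hmt, hms⟩ := Set.mem_iUnion₂.1 (ht (Set.mem_univ s))
    by_cases h : δ m < ε / 4
    · simp only [hU, if_pos h] at hms
      have hmn : m ≤ n := le_trans (Finset.le_sup (f := id) hmt) hn
      have := hδ m n hmn s
      have : f n s ≤ f m s + δ m := this
      have hfs : f m s < ε / 4 := hms
      linarith
    · simp only [hU, if_neg h] at hms
      exact absurd hms (Set.notMem_empty s)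
  calc ⨆ s : S, f n s ≤ ε / 2 := ciSup_le hbound
    _ < ε := by linarith
end

section
/- Let Z be a compound random sequence with nonempty state set S such that each Z_{n,s} is square-integrable with mean m_{n,s} := E[Z_{n,s}] and variance σ²_{n,s}. Assume: (i) lim_{n→∞} sup_{s∈S} σ²_{n,s} = 0, and (ii) there is a constant B with |m_{n,s}| ≤ B for all n and s. Then cinf(Z) = liminf_{n→∞} inf_{s∈S} m_{n,s}. -/
open Filter MeasureTheory ProbabilityTheory

noncomputable section

/-- The set of rates `R` for which `sup_{s∈S} P(Z_{n,s} ≤ R) → 0` as `n → ∞`;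
its supremum is the compound infimum `cinf`. -/
def cinfSet {S : Type*} (μ : ℕ → S → Measure ℝ) : Set ℝ :=
  {R : ℝ | Tendsto (fun n => ⨆ s : S, μ n s {x : ℝ | x ≤ R}) atTop (nhds 0)}

/-- The compound infimum of a compound random sequence given by its laws `μ n s`. -/
def cinf {S : Type*} (μ : ℕ → S → Measure ℝ) : ℝ := sSup (cinfSet μ)

/-! Write `L` for the liminf of the infimal means. For `R < L`, eventually all means exceed some
`c > R`, so Chebyshev bounds `μ n s {x ≤ R}` by `σ²_{n,s} / (c - R)²` uniformly in `s`, which tends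
to `0`. For `R > L`, infinitely often some state has mean below some `r < R` while every variance
is below `(R - r)² / 2`; Chebyshev then gives that state mass more than `1/2` on `{x ≤ R}`, so `R`
is not in `cinfSet μ`. Hence `cinfSet μ` contains every `R < L` and is bounded above by `L`. -/

section Chebyshev

variable {ν : Measure ℝ} {R δ : ℝ}

lemma measure_le_le_ofReal_variance_div_sq [IsFiniteMeasure ν] (hν : MemLp (fun x : ℝ => x) 2 ν)
    (hδ : 0 < δ) (hR : R + δ ≤ ∫ x, x ∂ν) :
    ν {x | x ≤ R} ≤ ENNReal.ofReal (variance (fun x : ℝ => x) ν / δ ^ 2) := by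
  refine (measure_mono fun x (hx : x ≤ R) => ?_).trans (meas_ge_le_variance_div_sq hν hδ)
  show δ ≤ |x - ∫ y, y ∂ν|
  exact le_abs.2 (Or.inr (by linarith))

lemma measure_gt_le_ofReal_variance_div_sq [IsFiniteMeasure ν] (hν : MemLp (fun x : ℝ => x) 2 ν)
    (hδ : 0 < δ) (hR : ∫ x, x ∂ν + δ ≤ R) :
    ν {x | R < x} ≤ ENNReal.ofReal (variance (fun x : ℝ => x) ν / δ ^ 2) := by
  refine (measure_mono fun x (hx : R < x) => ?_).trans (meas_ge_le_variance_div_sq hν hδ)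
  show δ ≤ |x - ∫ y, y ∂ν|
  exact le_abs.2 (Or.inl (by linarith))

lemma ofReal_one_sub_variance_div_sq_le_measure_le [IsProbabilityMeasure ν]
    (hν : MemLp (fun x : ℝ => x) 2 ν) (hδ : 0 < δ) (hR : ∫ x, x ∂ν + δ ≤ R) :
    ENNReal.ofReal (1 - variance (fun x : ℝ => x) ν / δ ^ 2) ≤ ν {x | x ≤ R} := by
  have hcompl : {x : ℝ | x ≤ R} = (Set.Ioi R)ᶜ := by ext; simp
  rw [hcompl, prob_compl_eq_one_sub measurableSet_Ioi,
    ENNReal.ofReal_sub _ (by have := variance_nonneg (fun x : ℝ => x) ν; positivity),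
    ENNReal.ofReal_one]
  exact tsub_le_tsub_left (measure_gt_le_ofReal_variance_div_sq hν hδ hR) 1

end Chebyshev

section CompoundInfimum

variable {S : Type*} {μ : ℕ → S → Measure ℝ}

lemma mem_cinfSet_of_lt_liminf [∀ n s, IsFiniteMeasure (μ n s)]
    (hL2 : ∀ n s, MemLp (fun x : ℝ => x) 2 (μ n s))
    (hvar : Tendsto (fun n => ⨆ s : S, ENNReal.ofReal (variance (fun x : ℝ => x) (μ n s)))
      atTop (nhds 0))
    (hbdd : ∀ n, BddBelow (Set.range fun s => ∫ x, x ∂(μ n s)))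
    (hbddUnder : IsBoundedUnder (· ≥ ·) atTop fun n => ⨅ s, ∫ x, x ∂(μ n s)) {R : ℝ}
    (hR : R < liminf (fun n => ⨅ s, ∫ x, x ∂(μ n s)) atTop) :
    R ∈ cinfSet μ := by
  obtain ⟨c, hRc, hcL⟩ := exists_between hR
  set C := ENNReal.ofReal ((c - R) ^ 2)⁻¹
  have hbound : ∀ᶠ n in atTop, ⨆ s, μ n s {x | x ≤ R} ≤
      (⨆ s, ENNReal.ofReal (variance (fun x : ℝ => x) (μ n s))) * C := by
    filter_upwards [eventually_lt_of_lt_liminf hcL hbddUnder] with n hn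
    refine iSup_le fun s => ?_
    have hmean : c < ∫ x, x ∂(μ n s) := hn.trans_le (ciInf_le (hbdd n) s)
    calc μ n s {x | x ≤ R}
        ≤ ENNReal.ofReal (variance (fun x : ℝ => x) (μ n s) / (c - R) ^ 2) :=
          measure_le_le_ofReal_variance_div_sq (hL2 n s) (sub_pos.2 hRc) (by linarith)
      _ = ENNReal.ofReal (variance (fun x : ℝ => x) (μ n s)) * C := by
          rw [div_eq_mul_inv, ENNReal.ofReal_mul (variance_nonneg _ _)]
      _ ≤ _ := by
          gcongr
          exact le_iSup (fun s => ENNReal.ofReal (variance (fun x : ℝ => x) (μ n s))) s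
  have hlim : Tendsto (fun n => (⨆ s, ENNReal.ofReal (variance (fun x : ℝ => x) (μ n s))) * C)
      atTop (nhds 0) := by
    simpa using ENNReal.Tendsto.mul_const hvar (Or.inr ENNReal.ofReal_ne_top)
  exact tendsto_of_tendsto_of_tendsto_of_le_of_le' tendsto_const_nhds hlim
    (Eventually.of_forall fun _ => zero_le) hbound

lemma le_liminf_of_mem_cinfSet [Nonempty S] [∀ n s, IsProbabilityMeasure (μ n s)]
    (hL2 : ∀ n s, MemLp (fun x : ℝ => x) 2 (μ n s))
    (hvar : Tendsto (fun n => ⨆ s : S, ENNReal.ofReal (variance (fun x : ℝ => x) (μ n s)))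
      atTop (nhds 0))
    (hcobdd : IsCoboundedUnder (· ≥ ·) atTop fun n => ⨅ s, ∫ x, x ∂(μ n s)) {R : ℝ}
    (hR : R ∈ cinfSet μ) :
    R ≤ liminf (fun n => ⨅ s, ∫ x, x ∂(μ n s)) atTop := by
  by_contra! hlt
  obtain ⟨r, hLr, hrR⟩ := exists_between hlt
  have hδ : 0 < R - r := sub_pos.2 hrR
  have hsmall : ∀ᶠ n in atTop, ⨆ s, ENNReal.ofReal (variance (fun x : ℝ => x) (μ n s)) <
      ENNReal.ofReal ((R - r) ^ 2 / 2) := hvar.eventually_lt_const (by simpa using pow_pos hδ 2)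
  have hlow : ∀ᶠ n in atTop, ⨆ s, μ n s {x | x ≤ R} < ENNReal.ofReal (1 / 2) :=
    hR.eventually_lt_const (by norm_num)
  obtain ⟨n, hgn, hvn, hμn⟩ :=
    ((frequently_lt_of_liminf_lt hcobdd hLr).and_eventually (hsmall.and hlow)).exists
  obtain ⟨s, hs⟩ := exists_lt_of_ciInf_lt hgn
  have hvs : variance (fun x : ℝ => x) (μ n s) < (R - r) ^ 2 / 2 :=
    (ENNReal.ofReal_lt_ofReal_iff (by positivity)).1 ((le_iSup _ s).trans_lt hvn)
  have hratio : variance (fun x : ℝ => x) (μ n s) / (R - r) ^ 2 < 1 / 2 := by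
    rw [div_lt_iff₀ (pow_pos hδ 2)]; linarith
  have hhalf : ENNReal.ofReal (1 / 2) < μ n s {x | x ≤ R} := calc
    _ < ENNReal.ofReal (1 - variance (fun x : ℝ => x) (μ n s) / (R - r) ^ 2) :=
      (ENNReal.ofReal_lt_ofReal_iff (by linarith)).2 (by linarith)
    _ ≤ μ n s {x | x ≤ R} :=
      ofReal_one_sub_variance_div_sq_le_measure_le (hL2 n s) hδ (by linarith)
  exact lt_irrefl _ ((hhalf.trans_le (le_iSup (fun s => μ n s {x | x ≤ R}) s)).trans hμn)

end CompoundInfimum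

/-- if each `Z_{n,s}` is square-integrable with mean `m_{n,s}` and variance
`σ²_{n,s}`, `sup_{s∈S} σ²_{n,s} → 0`, and the means are uniformly bounded, then
`cinf(Z) = liminf_{n→∞} inf_{s∈S} m_{n,s}`. -/
theorem cinf_eq_liminf_iInf_mean {S : Type*} [Nonempty S]
    (μ : ℕ → S → Measure ℝ) (hprob : ∀ n s, IsProbabilityMeasure (μ n s))
    (hL2 : ∀ n s, MemLp (fun x : ℝ => x) 2 (μ n s))
    (hvar : Tendsto (fun n => ⨆ s : S, ENNReal.ofReal (variance (fun x : ℝ => x) (μ n s)))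
      atTop (nhds 0))
    (B : ℝ) (hB : ∀ n s, |∫ x, x ∂(μ n s)| ≤ B) :
    cinf μ = Filter.liminf (fun n => ⨅ s : S, ∫ x, x ∂(μ n s)) atTop := by
  have hbdd : ∀ n, BddBelow (Set.range fun s => ∫ x, x ∂(μ n s)) := fun n =>
    ⟨-B, by rintro _ ⟨s, rfl⟩; exact (abs_le.1 (hB n s)).1⟩
  have hge : IsBoundedUnder (· ≥ ·) atTop fun n => ⨅ s, ∫ x, x ∂(μ n s) :=
    isBoundedUnder_of ⟨-B, fun n => le_ciInf fun s => (abs_le.1 (hB n s)).1⟩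
  have hle : IsBoundedUnder (· ≤ ·) atTop fun n => ⨅ s, ∫ x, x ∂(μ n s) :=
    isBoundedUnder_of ⟨B, fun n =>
      (ciInf_le (hbdd n) (Classical.arbitrary S)).trans (abs_le.1 (hB n _)).2⟩
  have hmem := fun R => mem_cinfSet_of_lt_liminf (R := R) hL2 hvar hbdd hge
  refine csSup_eq_of_forall_le_of_forall_lt_exists_gt ⟨_, hmem _ (sub_one_lt _)⟩
    (fun R hR => le_liminf_of_mem_cinfSet hL2 hvar hle.isCoboundedUnder_ge hR) fun w hw => ?_
  obtain ⟨R, hwR, hRL⟩ := exists_between hw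
  exact ⟨R, hmem R hRL, hwR⟩

end
end

section
/- Optimality of independent inputs for compound memoryless channels: in the compound memoryless channel setting, let σ²_{n,s} be the variance of the information density rate Z̃_{n,s} under the independent-symbols input p̃_n, and assume lim_{n→∞} sup_{s∈S} σ²_{n,s} = 0. Then, assuming the compound quantities are finite, cinf I(X;Y) ≤ cinf I(X̃;Ỹ), and moreover cinf I(X̃;Ỹ) = liminf_{n→∞} inf_{s∈S} (1/n)·Σ_{k=1}^n I(X̃_k;Ỹ_k|s), where I(X̃_k;Ỹ_k|s) is the mutual information of the k-th symbol pair under state s. -/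
/-!
Under the product input `p̃` the output law factorises and the `k`-th input marginal is still
`p_{n,k}`, so `Z̃_{n,s}` has mean exactly `(1/n) Σ_k I(X̃_k;Ỹ_k|s)`; since its variance tends to
zero uniformly in `s`, Chebyshev's inequality pins `cinf I(X̃;Ỹ)` to the liminf of the infimum
over `s` of these means. For the original input, memorylessness and Gibbs' inequality give
`E Z_{n,s} ≤ (1/n) Σ_k I(X̃_k;Ỹ_k|s)`, while `E[Z_{n,s}; Z_{n,s} ≤ R] ≥ -1/n`; hence every `R`
with `sup_s P(Z_{n,s} ≤ R) → 0` lies below that same liminf.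
-/

open Filter
open scoped ENNReal

noncomputable section

variable {S 𝒳 𝒴 : Type*} [Fintype 𝒳] [Fintype 𝒴]

/-- Blocklength-`n` memoryless channel weight `W_{n,s}(x)(y) = Π_k w_{k,s}(x_k)(y_k)`. -/
def Wblock (w : ℕ → S → 𝒳 → PMF 𝒴) (n : ℕ) (s : S) (x : Fin n → 𝒳) (y : Fin n → 𝒴) :
    ℝ≥0∞ :=
  ∏ k : Fin n, w k s (x k) (y k)

/-- The `k`-th one-dimensional marginal of the input distribution `p_n`. -/
def marg (p : ∀ n : ℕ, PMF (Fin n → 𝒳)) (n : ℕ) (k : Fin n) (u : 𝒳) : ℝ≥0∞ :=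
  ∑ x : Fin n → 𝒳, {x' : Fin n → 𝒳 | x' k = u}.indicator (fun x' => p n x') x

/-- The independent-symbols input `p̃_n(x) = Π_k p_{n,k}(x_k)` (product of marginals). -/
def ptilde (p : ∀ n : ℕ, PMF (Fin n → 𝒳)) (n : ℕ) (x : Fin n → 𝒳) : ℝ≥0∞ :=
  ∏ k : Fin n, marg p n k (x k)

/-- Output distribution induced by input weights `pw` through the block channel. -/
def outDistW (w : ℕ → S → 𝒳 → PMF 𝒴) (pw : ∀ n : ℕ, (Fin n → 𝒳) → ℝ≥0∞)
    (n : ℕ) (s : S) (y : Fin n → 𝒴) : ℝ≥0∞ :=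
  ∑ x : Fin n → 𝒳, pw n x * Wblock w n s x y

/-- Information density rate with input weights `pw`. -/
def densRate (w : ℕ → S → 𝒳 → PMF 𝒴) (pw : ∀ n : ℕ, (Fin n → 𝒳) → ℝ≥0∞)
    (n : ℕ) (s : S) (z : (Fin n → 𝒳) × (Fin n → 𝒴)) : ℝ :=
  (1 / (n : ℝ)) * Real.log ((Wblock w n s z.1 z.2).toReal /
    (outDistW w pw n s z.2).toReal)

/-- Probability of an event under the joint law given by input weights `pw` and the
block channel. -/
def probEventW (w : ℕ → S → 𝒳 → PMF 𝒴) (pw : ∀ n : ℕ, (Fin n → 𝒳) → ℝ≥0∞)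
    (n : ℕ) (s : S) (E : Set ((Fin n → 𝒳) × (Fin n → 𝒴))) : ℝ≥0∞ :=
  ∑ z : (Fin n → 𝒳) × (Fin n → 𝒴),
    E.indicator (fun z' => pw n z'.1 * Wblock w n s z'.1 z'.2) z

/-- The set whose supremum is the compound inf-information rate for input weights `pw`. -/
def cinfISetW (w : ℕ → S → 𝒳 → PMF 𝒴) (pw : ∀ n : ℕ, (Fin n → 𝒳) → ℝ≥0∞) : Set ℝ :=
  {R : ℝ | Tendsto (fun n => ⨆ s : S,
      probEventW w pw n s {z | densRate w pw n s z ≤ R}) atTop (nhds 0)}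

/-- The compound inf-information rate for input weights `pw`. -/
def cinfIW (w : ℕ → S → 𝒳 → PMF 𝒴) (pw : ∀ n : ℕ, (Fin n → 𝒳) → ℝ≥0∞) : ℝ :=
  sSup (cinfISetW w pw)

/-- Expectation under the joint law given by input weights `pw`. -/
def expW (w : ℕ → S → 𝒳 → PMF 𝒴) (pw : ∀ n : ℕ, (Fin n → 𝒳) → ℝ≥0∞)
    (n : ℕ) (s : S) (f : (Fin n → 𝒳) × (Fin n → 𝒴) → ℝ) : ℝ :=
  ∑ z : (Fin n → 𝒳) × (Fin n → 𝒴), (pw n z.1 * Wblock w n s z.1 z.2).toReal * f z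

/-- Variance of the information density rate under the independent-symbols input `p̃`. -/
def varTilde (w : ℕ → S → 𝒳 → PMF 𝒴) (p : ∀ n : ℕ, PMF (Fin n → 𝒳))
    (n : ℕ) (s : S) : ℝ :=
  expW w (fun m => ptilde p m) n s (fun z =>
    (densRate w (fun m => ptilde p m) n s z -
      expW w (fun m => ptilde p m) n s (densRate w (fun m => ptilde p m) n s)) ^ 2)

/-- Output distribution of the `k`-th symbol under the marginal input `p_{n,k}`. -/
def qsym (w : ℕ → S → 𝒳 → PMF 𝒴) (p : ∀ n : ℕ, PMF (Fin n → 𝒳))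
    (n : ℕ) (k : Fin n) (s : S) (v : 𝒴) : ℝ≥0∞ :=
  ∑ u : 𝒳, marg p n k u * w k s u v

/-- The `k`-th symbol mutual information `I(X̃_k;Ỹ_k|s)`. -/
def Isym (w : ℕ → S → 𝒳 → PMF 𝒴) (p : ∀ n : ℕ, PMF (Fin n → 𝒳))
    (n : ℕ) (k : Fin n) (s : S) : ℝ :=
  ∑ u : 𝒳, ∑ v : 𝒴, (marg p n k u * w k s u v).toReal *
    Real.log ((w k s u v).toReal / (qsym w p n k s v).toReal)

open Finset Topology

theorem sub_le_mul_log_div {a b : ℝ} (ha : 0 ≤ a) (hb : 0 ≤ b) (hab : a ≠ 0 → b ≠ 0) :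
    a - b ≤ a * Real.log (a / b) := by
  rcases ha.eq_or_lt with rfl | ha
  · simpa using hb
  have hb : 0 < b := hb.lt_of_ne' (hab ha.ne')
  have := mul_le_mul_of_nonneg_left (Real.one_sub_inv_le_log_of_pos (div_pos ha hb)) ha.le
  rwa [inv_div, mul_sub, mul_one, mul_div_cancel₀ _ ha.ne'] at this

theorem sum_sub_sum_le_sum_mul_log_div {ι : Type*} (t : Finset ι) {a b : ι → ℝ}
    (ha : ∀ i, 0 ≤ a i) (hb : ∀ i, 0 ≤ b i) (hab : ∀ i, a i ≠ 0 → b i ≠ 0) :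
    ∑ i ∈ t, a i - ∑ i ∈ t, b i ≤ ∑ i ∈ t, a i * Real.log (a i / b i) := by
  rw [← sum_sub_distrib]
  exact sum_le_sum fun i _ => sub_le_mul_log_div (ha i) (hb i) (hab i)

theorem sum_mul_log_div_nonneg {ι : Type*} (t : Finset ι) {a b : ι → ℝ}
    (ha : ∀ i, 0 ≤ a i) (hb : ∀ i, 0 ≤ b i) (hab : ∀ i, a i ≠ 0 → b i ≠ 0)
    (hsum : ∑ i ∈ t, b i ≤ ∑ i ∈ t, a i) :
    0 ≤ ∑ i ∈ t, a i * Real.log (a i / b i) :=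
  (sub_nonneg.mpr hsum).trans (sum_sub_sum_le_sum_mul_log_div t ha hb hab)

theorem Real.log_div_le_neg_log {a b : ℝ} (ha : 0 ≤ a) (ha₁ : a ≤ 1) (hb : 0 ≤ b) (hb₁ : b ≤ 1) :
    Real.log (a / b) ≤ -Real.log b := by
  rcases ha.eq_or_lt with rfl | ha
  · simpa using Real.log_nonpos hb hb₁
  rcases hb.eq_or_lt with rfl | hb
  · simp
  rw [Real.log_div ha.ne' hb.ne']
  linarith [Real.log_nonpos ha.le ha₁]

section FiniteWeights

variable {Ω : Type*} [Fintype Ω] {μ : Ω → ℝ}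

theorem sum_indicator_compl (E : Set Ω) :
    ∑ ω, Eᶜ.indicator μ ω = ∑ ω, μ ω - ∑ ω, E.indicator μ ω := by
  simp only [Set.indicator_compl, Pi.sub_apply, sum_sub_distrib]

theorem sq_mul_sum_indicator_le_sum_mul_sq (hμ : ∀ ω, 0 ≤ μ ω) {f : Ω → ℝ} {m δ : ℝ}
    (hδ : 0 ≤ δ) {E : Set Ω} (hE : ∀ ω ∈ E, δ ≤ |f ω - m|) :
    δ ^ 2 * ∑ ω, E.indicator μ ω ≤ ∑ ω, μ ω * (f ω - m) ^ 2 := by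
  rw [mul_sum]
  refine sum_le_sum fun ω _ => ?_
  by_cases hω : ω ∈ E
  · rw [Set.indicator_of_mem hω, mul_comm, ← sq_abs (f ω - m)]
    exact mul_le_mul_of_nonneg_left (pow_le_pow_left₀ hδ (hE ω hω) 2) (hμ ω)
  · rw [Set.indicator_of_notMem hω, mul_zero]
    exact mul_nonneg (hμ ω) (sq_nonneg _)

theorem sum_indicator_mul_add_mul_le_sum_mul (hμ : ∀ ω, 0 ≤ μ ω) (f : Ω → ℝ) (R : ℝ) :
    ∑ ω, {ω | f ω ≤ R}.indicator (fun ω => μ ω * f ω) ω +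
      R * ∑ ω, {ω | f ω ≤ R}ᶜ.indicator μ ω ≤ ∑ ω, μ ω * f ω := by
  rw [mul_sum, ← sum_add_distrib]
  refine sum_le_sum fun ω _ => ?_
  by_cases hω : f ω ≤ R
  · simp [hω]
  · rw [Set.indicator_of_notMem (show ω ∉ {ω | f ω ≤ R} from hω),
      Set.indicator_of_mem (show ω ∈ {ω | f ω ≤ R}ᶜ from hω), zero_add, mul_comm]
    exact mul_le_mul_of_nonneg_left (not_le.mp hω).le (hμ ω)

end FiniteWeights

theorem Fintype.sum_pi_prod_mul_apply {ι α R : Type*} [Fintype ι] [DecidableEq ι] [Fintype α]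
    [CommSemiring R] (A : ι → α → R) {k : ι} (hA : ∀ j ≠ k, ∑ a, A j a = 1) (F : α → R) :
    ∑ h : ι → α, (∏ j, A j (h j)) * F (h k) = ∑ a, A k a * F a := by
  set B : ι → α → R := Function.update A k fun a => A k a * F a
  have hB : ∀ h : ι → α, (∏ j, A j (h j)) * F (h k) = ∏ j, B j (h j) := by
    intro h
    have hrest : ∏ j ∈ univ.erase k, B j (h j) = ∏ j ∈ univ.erase k, A j (h j) :=
      Finset.prod_congr rfl fun j hj => by simp only [B, Function.update_of_ne (ne_of_mem_erase hj)]
    rw [← mul_prod_erase univ (fun j => B j (h j)) (mem_univ k),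
      ← mul_prod_erase univ (fun j => A j (h j)) (mem_univ k), hrest]
    simp only [B, Function.update_self]
    ring
  simp only [hB]
  rw [← Fintype.prod_sum,
    ← mul_prod_erase univ (fun j => ∑ a, B j a) (mem_univ k), Finset.prod_eq_one fun j hj => ?_]
  · simp [B]
  · simp only [B, Function.update_of_ne (ne_of_mem_erase hj)]
    exact hA j (ne_of_mem_erase hj)

theorem PMF.sum_coe_eq_one {α : Type*} [Fintype α] (q : PMF α) : ∑ a, q a = 1 := by
  rw [← tsum_fintype (L := SummationFilter.unconditional _)]
  exact q.tsum_coe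

namespace ENNReal

variable {ι : Type*} [Fintype ι] {f : ι → ℝ≥0∞}

theorem ne_top_of_sum_eq_one (h : ∑ i, f i = 1) (i : ι) : f i ≠ ⊤ := fun hi =>
  one_ne_top (h ▸ sum_eq_top.mpr ⟨i, mem_univ i, hi⟩)

theorem sum_toReal_eq_one (h : ∑ i, f i = 1) : ∑ i, (f i).toReal = 1 := by
  rw [← toReal_sum fun i _ => ne_top_of_sum_eq_one h i, h, toReal_one]

end ENNReal

section Channel

variable (w : ℕ → S → 𝒳 → PMF 𝒴) (p : ∀ n : ℕ, PMF (Fin n → 𝒳))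
  (pw : ∀ n : ℕ, (Fin n → 𝒳) → ℝ≥0∞) (n : ℕ) (s : S)

omit [Fintype 𝒳] in
theorem sum_Wblock (x : Fin n → 𝒳) : ∑ y, Wblock w n s x y = 1 := by
  simp only [Wblock, ← Fintype.prod_sum, PMF.sum_coe_eq_one, prod_const_one]

theorem sum_marg (k : Fin n) : ∑ u, marg p n k u = 1 := by
  classical
  unfold marg
  rw [sum_comm]
  simp [Set.indicator_apply, PMF.sum_coe_eq_one]

theorem sum_ptilde : ∑ x, ptilde p n x = 1 := by
  simp only [ptilde, ← Fintype.prod_sum, sum_marg, prod_const_one]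

theorem sum_qsym (k : Fin n) : ∑ v, qsym w p n k s v = 1 := by
  simp only [qsym]
  rw [sum_comm]
  simp only [← mul_sum, PMF.sum_coe_eq_one, mul_one, sum_marg]

omit [Fintype 𝒴] in
theorem outDistW_ptilde (y : Fin n → 𝒴) :
    outDistW w (fun m => ptilde p m) n s y = ∏ k, qsym w p n k s (y k) := by
  simp only [outDistW, ptilde, Wblock, qsym, Fintype.prod_sum, prod_mul_distrib]

theorem sum_outDistW (hpw : ∑ x, pw n x = 1) : ∑ y, outDistW w pw n s y = 1 := by
  simp only [outDistW]
  rw [sum_comm]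
  simp only [← mul_sum, sum_Wblock, mul_one, hpw]

omit [Fintype 𝒴] in
theorem le_outDistW (x : Fin n → 𝒳) (y : Fin n → 𝒴) :
    pw n x * Wblock w n s x y ≤ outDistW w pw n s y :=
  single_le_sum (f := fun x => pw n x * Wblock w n s x y) (fun _ _ => zero_le) (mem_univ x)

theorem le_marg (x : Fin n → 𝒳) (k : Fin n) : p n x ≤ marg p n k (x k) :=
  calc p n x = {x' : Fin n → 𝒳 | x' k = x k}.indicator (fun x' => p n x') x :=
        (Set.indicator_of_mem (s := {x' : Fin n → 𝒳 | x' k = x k}) rfl _).symm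
    _ ≤ marg p n k (x k) := single_le_sum (fun _ _ => zero_le) (mem_univ x)

omit [Fintype 𝒴] in
theorem le_qsym (k : Fin n) (u : 𝒳) (v : 𝒴) : marg p n k u * w k s u v ≤ qsym w p n k s v :=
  single_le_sum (f := fun u => marg p n k u * w k s u v) (fun _ _ => zero_le) (mem_univ u)

theorem marg_ne_zero_of_ptilde_ne_zero {x : Fin n → 𝒳} (hx : ptilde p n x ≠ 0) (k : Fin n) :
    marg p n k (x k) ≠ 0 :=
  prod_ne_zero_iff.mp hx k (mem_univ k)

theorem marg_ne_zero_of_ne_zero {x : Fin n → 𝒳} (hx : p n x ≠ 0) (k : Fin n) :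
    marg p n k (x k) ≠ 0 :=
  fun h => hx (le_zero_iff.mp (h ▸ le_marg p n x k))

end Channel

section JointLaw

variable (w : ℕ → S → 𝒳 → PMF 𝒴) (pw : ∀ n : ℕ, (Fin n → 𝒳) → ℝ≥0∞) (n : ℕ) (s : S)

def jointReal (z : (Fin n → 𝒳) × (Fin n → 𝒴)) : ℝ :=
  (pw n z.1 * Wblock w n s z.1 z.2).toReal

def probReal (E : Set ((Fin n → 𝒳) × (Fin n → 𝒴))) : ℝ :=
  ∑ z, E.indicator (jointReal w pw n s) z

omit [Fintype 𝒳] [Fintype 𝒴] in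
theorem jointReal_nonneg (z : (Fin n → 𝒳) × (Fin n → 𝒴)) : 0 ≤ jointReal w pw n s z :=
  ENNReal.toReal_nonneg

theorem expW_eq_sum_jointReal (f : (Fin n → 𝒳) × (Fin n → 𝒴) → ℝ) :
    expW w pw n s f = ∑ z, jointReal w pw n s z * f z :=
  rfl

omit [Fintype 𝒴] in
theorem outDistW_ne_zero {pw n} {z : (Fin n → 𝒳) × (Fin n → 𝒴)} (hz : jointReal w pw n s z ≠ 0) :
    outDistW w pw n s z.2 ≠ 0 :=
  fun h => (ENNReal.toReal_ne_zero.mp hz).1 (le_zero_iff.mp (h ▸ le_outDistW w pw n s z.1 z.2))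

variable {pw n} (hpw : ∑ x, pw n x = 1)
include hpw

theorem sum_jointReal : ∑ z, jointReal w pw n s z = 1 := by
  refine ENNReal.sum_toReal_eq_one ?_
  rw [Fintype.sum_prod_type]
  simp only [← mul_sum, sum_Wblock, mul_one, hpw]

theorem probEventW_eq_ofReal (E : Set ((Fin n → 𝒳) × (Fin n → 𝒴))) :
    probEventW w pw n s E = ENNReal.ofReal (probReal w pw n s E) := by
  rw [probEventW, probReal, ENNReal.ofReal_sum_of_nonneg fun z _ =>
    Set.indicator_nonneg (fun z _ => jointReal_nonneg w pw n s z) z]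
  refine sum_congr rfl fun z _ => ?_
  by_cases hz : z ∈ E
  · rw [Set.indicator_of_mem hz, Set.indicator_of_mem hz, jointReal]
    exact (ENNReal.ofReal_toReal (ENNReal.mul_ne_top (ENNReal.ne_top_of_sum_eq_one hpw _)
      (ENNReal.ne_top_of_sum_eq_one (sum_Wblock w n s z.1) z.2))).symm
  · rw [Set.indicator_of_notMem hz, Set.indicator_of_notMem hz, ENNReal.ofReal_zero]

theorem jointReal_ne_zero_iff (z : (Fin n → 𝒳) × (Fin n → 𝒴)) :
    jointReal w pw n s z ≠ 0 ↔ pw n z.1 ≠ 0 ∧ ∀ k : Fin n, w k s (z.1 k) (z.2 k) ≠ 0 := by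
  rw [jointReal, ENNReal.toReal_ne_zero, mul_ne_zero_iff, Wblock, prod_ne_zero_iff]
  simp only [mem_univ, true_implies]
  exact and_iff_left (ENNReal.mul_ne_top (ENNReal.ne_top_of_sum_eq_one hpw _)
    (ENNReal.ne_top_of_sum_eq_one (sum_Wblock w n s z.1) z.2))

end JointLaw

section SymbolMarginals

variable (w : ℕ → S → 𝒳 → PMF 𝒴) (p : ∀ n : ℕ, PMF (Fin n → 𝒳)) {n : ℕ} (s : S)

theorem toReal_marg [DecidableEq 𝒳] (k : Fin n) (u : 𝒳) :
    (marg p n k u).toReal = ∑ x with x k = u, (p n x).toReal := by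
  rw [marg, ← ENNReal.toReal_sum fun x _ => PMF.apply_ne_top _ x, sum_filter]
  simp only [Set.indicator_apply, Set.mem_ofPred_eq]

theorem sum_toReal_mul_apply_eq_marg (k : Fin n) (G : 𝒳 → ℝ) :
    ∑ x, (p n x).toReal * G (x k) = ∑ u, (marg p n k u).toReal * G u := by
  classical
  rw [← sum_fiberwise univ (fun x : Fin n → 𝒳 => x k)]
  refine sum_congr rfl fun u _ => ?_
  rw [toReal_marg, sum_mul]
  exact sum_congr rfl fun x hx => by rw [(mem_filter.mp hx).2]

theorem sum_toReal_ptilde_mul_apply_eq_marg (k : Fin n) (G : 𝒳 → ℝ) :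
    ∑ x, (ptilde p n x).toReal * G (x k) = ∑ u, (marg p n k u).toReal * G u := by
  simp only [ptilde, ENNReal.toReal_prod]
  exact Fintype.sum_pi_prod_mul_apply (fun j u => (marg p n j u).toReal)
    (fun j _ => ENNReal.sum_toReal_eq_one (sum_marg p n j)) G

theorem expW_comp_eval {pw : ∀ n : ℕ, (Fin n → 𝒳) → ℝ≥0∞} {k : Fin n}
    (hmarg : ∀ G : 𝒳 → ℝ, ∑ x, (pw n x).toReal * G (x k) = ∑ u, (marg p n k u).toReal * G u)
    (F : 𝒳 → 𝒴 → ℝ) :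
    expW w pw n s (fun z => F (z.1 k) (z.2 k)) =
      ∑ u, ∑ v, (marg p n k u * w k s u v).toReal * F u v := by
  have hinner : ∀ x : Fin n → 𝒳, ∑ y : Fin n → 𝒴, (pw n x * Wblock w n s x y).toReal * F (x k) (y k)
      = (pw n x).toReal * ∑ v, (w k s (x k) v).toReal * F (x k) v := by
    intro x
    simp only [ENNReal.toReal_mul, Wblock, ENNReal.toReal_prod, mul_assoc, ← mul_sum]
    exact congrArg _ (Fintype.sum_pi_prod_mul_apply (fun (j : Fin n) v => (w j s (x j) v).toReal)
      (fun j _ => ENNReal.sum_toReal_eq_one (PMF.sum_coe_eq_one _)) _)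
  rw [expW, Fintype.sum_prod_type]
  simp only [hinner]
  rw [hmarg fun u => ∑ v, (w k s u v).toReal * F u v]
  simp only [mul_sum, ENNReal.toReal_mul, mul_assoc]

omit [Fintype 𝒴] in
theorem qsym_ne_zero {k : Fin n} {u : 𝒳} {v : 𝒴} (hm : marg p n k u ≠ 0) (hw : w k s u v ≠ 0) :
    qsym w p n k s v ≠ 0 :=
  fun h => mul_ne_zero hm hw (le_zero_iff.mp (h ▸ le_qsym w p n s k u v))

end SymbolMarginals

section Expectation

variable (w : ℕ → S → 𝒳 → PMF 𝒴) {pw : ∀ n : ℕ, (Fin n → 𝒳) → ℝ≥0∞} {n : ℕ} (s : S)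

theorem expW_congr {f g : (Fin n → 𝒳) × (Fin n → 𝒴) → ℝ}
    (h : ∀ z, jointReal w pw n s z ≠ 0 → f z = g z) : expW w pw n s f = expW w pw n s g := by
  simp only [expW_eq_sum_jointReal]
  exact sum_congr rfl fun z _ => by by_cases hz : jointReal w pw n s z = 0 <;> simp [hz, h z]

theorem expW_const_mul (c : ℝ) (f : (Fin n → 𝒳) × (Fin n → 𝒴) → ℝ) :
    expW w pw n s (fun z => c * f z) = c * expW w pw n s f := by
  simp only [expW, mul_sum, mul_left_comm]

theorem expW_sub (f g : (Fin n → 𝒳) × (Fin n → 𝒴) → ℝ) :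
    expW w pw n s (fun z => f z - g z) = expW w pw n s f - expW w pw n s g := by
  simp only [expW, mul_sub, sum_sub_distrib]

theorem expW_comp_snd (hpw : ∑ x, pw n x = 1) (g : (Fin n → 𝒴) → ℝ) :
    expW w pw n s (fun z => g z.2) = ∑ y, (outDistW w pw n s y).toReal * g y := by
  rw [expW, Fintype.sum_prod_type_right]
  refine sum_congr rfl fun y _ => ?_
  dsimp only
  rw [← sum_mul, outDistW, ENNReal.toReal_sum fun x _ => ENNReal.mul_ne_top
    (ENNReal.ne_top_of_sum_eq_one hpw x) (ENNReal.ne_top_of_sum_eq_one (sum_Wblock w n s x) y)]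

end Expectation

def meanIsym (w : ℕ → S → 𝒳 → PMF 𝒴) (p : ∀ n : ℕ, PMF (Fin n → 𝒳)) (n : ℕ) (s : S) : ℝ :=
  (1 / (n : ℝ)) * ∑ k : Fin n, Isym w p n k s

def infMeanIsym (w : ℕ → S → 𝒳 → PMF 𝒴) (p : ∀ n : ℕ, PMF (Fin n → 𝒳)) (n : ℕ) : ℝ :=
  ⨅ s, meanIsym w p n s

section InformationDensity

variable (w : ℕ → S → 𝒳 → PMF 𝒴) (p : ∀ n : ℕ, PMF (Fin n → 𝒳))
  {pw : ∀ n : ℕ, (Fin n → 𝒳) → ℝ≥0∞} {n : ℕ} (s : S)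

theorem toReal_qsym_ne_zero (hpw : ∑ x, pw n x = 1)
    (hsupp : ∀ x, pw n x ≠ 0 → ∀ k, marg p n k (x k) ≠ 0)
    {z : (Fin n → 𝒳) × (Fin n → 𝒴)} (hz : jointReal w pw n s z ≠ 0) (k : Fin n) :
    (qsym w p n k s (z.2 k)).toReal ≠ 0 := by
  obtain ⟨hx, hw⟩ := (jointReal_ne_zero_iff w s hpw z).mp hz
  exact ENNReal.toReal_ne_zero.mpr ⟨qsym_ne_zero w p s (hsupp _ hx k) (hw k),
    ENNReal.ne_top_of_sum_eq_one (sum_qsym w p n s k) _⟩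

theorem log_Wblock_div_prod_qsym (hpw : ∑ x, pw n x = 1)
    (hsupp : ∀ x, pw n x ≠ 0 → ∀ k, marg p n k (x k) ≠ 0)
    {z : (Fin n → 𝒳) × (Fin n → 𝒴)} (hz : jointReal w pw n s z ≠ 0) :
    Real.log ((Wblock w n s z.1 z.2).toReal / ∏ k, (qsym w p n k s (z.2 k)).toReal) =
      ∑ k : Fin n, Real.log ((w k s (z.1 k) (z.2 k)).toReal / (qsym w p n k s (z.2 k)).toReal) := by
  obtain ⟨-, hw⟩ := (jointReal_ne_zero_iff w s hpw z).mp hz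
  rw [Wblock, ENNReal.toReal_prod, ← prod_div_distrib, Real.log_prod fun k _ =>
    div_ne_zero (ENNReal.toReal_ne_zero.mpr ⟨hw k, PMF.apply_ne_top _ _⟩)
      (toReal_qsym_ne_zero w p s hpw hsupp hz k)]

theorem expW_log_Wblock_div_prod_qsym (hpw : ∑ x, pw n x = 1)
    (hsupp : ∀ x, pw n x ≠ 0 → ∀ k, marg p n k (x k) ≠ 0)
    (hmarg : ∀ (k : Fin n) (G : 𝒳 → ℝ),
      ∑ x, (pw n x).toReal * G (x k) = ∑ u, (marg p n k u).toReal * G u) :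
    expW w pw n s (fun z =>
        Real.log ((Wblock w n s z.1 z.2).toReal / ∏ k, (qsym w p n k s (z.2 k)).toReal)) =
      ∑ k, Isym w p n k s := by
  rw [expW_congr w s fun z hz => log_Wblock_div_prod_qsym w p s hpw hsupp hz]
  simp only [expW, mul_sum]
  rw [sum_comm]
  exact sum_congr rfl fun k _ => expW_comp_eval w p s (hmarg k)
    (fun u v => Real.log ((w k s u v).toReal / (qsym w p n k s v).toReal))

theorem expW_densRate_ptilde :
    expW w (fun m => ptilde p m) n s (densRate w (fun m => ptilde p m) n s) =
      meanIsym w p n s := by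
  have hdens : densRate w (fun m => ptilde p m) n s = fun z => (1 / (n : ℝ)) *
      Real.log ((Wblock w n s z.1 z.2).toReal / ∏ k, (qsym w p n k s (z.2 k)).toReal) := by
    funext z
    rw [densRate, outDistW_ptilde, ENNReal.toReal_prod]
  rw [hdens, expW_const_mul, expW_log_Wblock_div_prod_qsym w p s (sum_ptilde p n)
    (fun _ hx => marg_ne_zero_of_ptilde_ne_zero p n hx) (sum_toReal_ptilde_mul_apply_eq_marg p),
    meanIsym]

end InformationDensity

section SymbolInformation

variable (w : ℕ → S → 𝒳 → PMF 𝒴) (p : ∀ n : ℕ, PMF (Fin n → 𝒳)) (n : ℕ) (s : S)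

theorem Isym_nonneg (k : Fin n) : 0 ≤ Isym w p n k s := by
  set a : 𝒳 × 𝒴 → ℝ := fun z => (marg p n k z.1 * w k s z.1 z.2).toReal
  set b : 𝒳 × 𝒴 → ℝ := fun z => (marg p n k z.1).toReal * (qsym w p n k s z.2).toReal
  have hterm : ∀ z : 𝒳 × 𝒴, a z * Real.log (a z / b z) =
      a z * Real.log ((w k s z.1 z.2).toReal / (qsym w p n k s z.2).toReal) := by
    intro z
    rcases eq_or_ne (marg p n k z.1).toReal 0 with hm | hm
    · simp [a, ENNReal.toReal_mul, hm]
    · simp only [a, b, ENNReal.toReal_mul, mul_div_mul_left _ _ hm]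
  have hsum_a : ∑ z, a z = 1 := by
    rw [Fintype.sum_prod_type]
    simp only [a, ENNReal.toReal_mul, ← mul_sum,
      ENNReal.sum_toReal_eq_one (PMF.sum_coe_eq_one _), mul_one,
      ENNReal.sum_toReal_eq_one (sum_marg p n k)]
  have hsum_b : ∑ z, b z = 1 := by
    rw [Fintype.sum_prod_type]
    simp only [b, ← mul_sum, ENNReal.sum_toReal_eq_one (sum_qsym w p n s k), mul_one,
      ENNReal.sum_toReal_eq_one (sum_marg p n k)]
  have hsupp : ∀ z, a z ≠ 0 → b z ≠ 0 := by
    intro z hz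
    obtain ⟨hm, hw⟩ := mul_ne_zero_iff.mp (ENNReal.toReal_ne_zero.mp hz).1
    exact mul_ne_zero (ENNReal.toReal_ne_zero.mpr ⟨hm, ENNReal.ne_top_of_sum_eq_one
      (sum_marg p n k) _⟩) (ENNReal.toReal_ne_zero.mpr ⟨qsym_ne_zero w p s hm hw,
        ENNReal.ne_top_of_sum_eq_one (sum_qsym w p n s k) _⟩)
  have := sum_mul_log_div_nonneg univ (fun _ => ENNReal.toReal_nonneg)
    (fun _ => mul_nonneg ENNReal.toReal_nonneg ENNReal.toReal_nonneg) hsupp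
    (hsum_b.trans hsum_a.symm).le
  rwa [sum_congr rfl fun z _ => hterm z, Fintype.sum_prod_type] at this

theorem Isym_le_card (k : Fin n) : Isym w p n k s ≤ Fintype.card 𝒴 := by
  have hq : ∀ v, (qsym w p n k s v).toReal ≤ 1 := fun v =>
    ENNReal.toReal_le_of_le_ofReal zero_le_one (by
      rw [ENNReal.ofReal_one, ← sum_qsym w p n s k]
      exact single_le_sum (fun _ _ => zero_le) (mem_univ v))
  calc Isym w p n k s
      ≤ ∑ u, ∑ v, (marg p n k u * w k s u v).toReal * -Real.log (qsym w p n k s v).toReal :=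
        sum_le_sum fun u _ => sum_le_sum fun v _ => mul_le_mul_of_nonneg_left
          (Real.log_div_le_neg_log ENNReal.toReal_nonneg
            (ENNReal.toReal_le_of_le_ofReal zero_le_one (by simpa using PMF.coe_le_one _ v))
            ENNReal.toReal_nonneg (hq v)) ENNReal.toReal_nonneg
    _ = ∑ v, Real.negMulLog (qsym w p n k s v).toReal := by
        rw [sum_comm]
        refine sum_congr rfl fun v _ => ?_
        rw [← sum_mul, qsym, ENNReal.toReal_sum fun u _ => ENNReal.mul_ne_top
          (ENNReal.ne_top_of_sum_eq_one (sum_marg p n k) u) (PMF.apply_ne_top _ v),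
          Real.negMulLog, neg_mul, mul_neg]
    _ ≤ ∑ _v : 𝒴, 1 := sum_le_sum fun v _ =>
        (Real.negMulLog_le_one_sub_self ENNReal.toReal_nonneg).trans
          (sub_le_self _ ENNReal.toReal_nonneg)
    _ = Fintype.card 𝒴 := by simp

theorem meanIsym_nonneg : 0 ≤ meanIsym w p n s :=
  mul_nonneg (by positivity) (sum_nonneg fun k _ => Isym_nonneg w p n s k)

theorem meanIsym_le_card : meanIsym w p n s ≤ Fintype.card 𝒴 := by
  rw [meanIsym, one_div_mul_eq_div]
  refine div_le_of_le_mul₀ n.cast_nonneg (Nat.cast_nonneg _) ?_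
  calc ∑ k : Fin n, Isym w p n k s ≤ ∑ _k : Fin n, (Fintype.card 𝒴 : ℝ) :=
        sum_le_sum fun k _ => Isym_le_card w p n s k
    _ = Fintype.card 𝒴 * n := by simp [mul_comm]

end SymbolInformation

section OriginalInput

variable (w : ℕ → S → 𝒳 → PMF 𝒴) (p : ∀ n : ℕ, PMF (Fin n → 𝒳)) {n : ℕ} (s : S)

theorem sum_outDistW_mul_log_div_prod_qsym_nonneg :
    0 ≤ ∑ y, (outDistW w (fun m x => p m x) n s y).toReal *
      Real.log ((outDistW w (fun m x => p m x) n s y).toReal /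
        ∏ k, (qsym w p n k s (y k)).toReal) := by
  have hp : ∑ x, p n x = 1 := PMF.sum_coe_eq_one _
  refine sum_mul_log_div_nonneg univ (fun _ => ENNReal.toReal_nonneg)
    (fun _ => prod_nonneg fun _ _ => ENNReal.toReal_nonneg) (fun y hy => ?_) ?_
  · obtain ⟨x, -, hx⟩ := exists_ne_zero_of_sum_ne_zero (ENNReal.toReal_ne_zero.mp hy).1
    have hz : jointReal w (fun m x => p m x) n s (x, y) ≠ 0 :=
      ENNReal.toReal_ne_zero.mpr ⟨hx, ENNReal.mul_ne_top (PMF.apply_ne_top _ x)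
        (ENNReal.ne_top_of_sum_eq_one (sum_Wblock w n s x) y)⟩
    exact prod_ne_zero_iff.mpr fun k _ => toReal_qsym_ne_zero w p s hp
      (fun _ hx => marg_ne_zero_of_ne_zero p n hx) hz k
  · simp only [← ENNReal.toReal_prod, ← outDistW_ptilde]
    rw [ENNReal.sum_toReal_eq_one (sum_outDistW w _ n s (sum_ptilde p n)),
      ENNReal.sum_toReal_eq_one (sum_outDistW w _ n s hp)]

theorem expW_densRate_le_meanIsym :
    expW w (fun m x => p m x) n s (densRate w (fun m x => p m x) n s) ≤ meanIsym w p n s := by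
  have hp : ∑ x, p n x = 1 := PMF.sum_coe_eq_one _
  have hsupp : ∀ x, p n x ≠ 0 → ∀ k, marg p n k (x k) ≠ 0 :=
    fun _ hx => marg_ne_zero_of_ne_zero p n hx
  set q := fun y => (outDistW w (fun m x => p m x) n s y).toReal
  set qt := fun y : Fin n → 𝒴 => ∏ k, (qsym w p n k s (y k)).toReal
  -- the correction term `log (q / qt)` has mean `D(q ‖ ∏ₖ qₖ) ≥ 0`
  have hsplit : ∀ z, jointReal w (fun m x => p m x) n s z ≠ 0 →
      densRate w (fun m x => p m x) n s z = (1 / (n : ℝ)) *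
        (Real.log ((Wblock w n s z.1 z.2).toReal / qt z.2) - Real.log (q z.2 / qt z.2)) := by
    intro z hz
    have hW : (Wblock w n s z.1 z.2).toReal ≠ 0 :=
      right_ne_zero_of_mul (by rwa [jointReal, ENNReal.toReal_mul] at hz)
    have hq : q z.2 ≠ 0 := ENNReal.toReal_ne_zero.mpr ⟨outDistW_ne_zero w s hz,
      ENNReal.ne_top_of_sum_eq_one (sum_outDistW w _ n s hp) _⟩
    have hqt : qt z.2 ≠ 0 :=
      prod_ne_zero_iff.mpr fun k _ => toReal_qsym_ne_zero w p s hp hsupp hz k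
    rw [densRate, Real.log_div hW hq, Real.log_div hW hqt, Real.log_div hq hqt]
    ring
  rw [expW_congr w s hsplit, expW_const_mul, expW_sub,
    expW_log_Wblock_div_prod_qsym w p s hp hsupp (sum_toReal_mul_apply_eq_marg p),
    expW_comp_snd w s hp fun y => Real.log (q y / qt y), meanIsym]
  exact mul_le_mul_of_nonneg_left
    (sub_le_self _ (sum_outDistW_mul_log_div_prod_qsym_nonneg w p s)) (by positivity)

end OriginalInput

theorem neg_one_div_le_sum_indicator_mul_densRate (w : ℕ → S → 𝒳 → PMF 𝒴)
    {pw : ∀ n : ℕ, (Fin n → 𝒳) → ℝ≥0∞} {n : ℕ} (s : S) (hpw : ∑ x, pw n x = 1)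
    (A : Set ((Fin n → 𝒳) × (Fin n → 𝒴))) :
    -(1 / (n : ℝ)) ≤
      ∑ z, A.indicator (fun z => jointReal w pw n s z * densRate w pw n s z) z := by
  classical
  set μ := jointReal w pw n s
  set ν : (Fin n → 𝒳) × (Fin n → 𝒴) → ℝ :=
    fun z => (pw n z.1).toReal * (outDistW w pw n s z.2).toReal
  have hν_nonneg : ∀ z, 0 ≤ ν z := fun z => mul_nonneg ENNReal.toReal_nonneg ENNReal.toReal_nonneg
  have hν : ∑ z, ν z = 1 := by
    rw [Fintype.sum_prod_type]
    simp only [ν, ← mul_sum, ENNReal.sum_toReal_eq_one (sum_outDistW w pw n s hpw), mul_one,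
      ENNReal.sum_toReal_eq_one hpw]
  have hsupp : ∀ z, μ z ≠ 0 → ν z ≠ 0 := fun z hz =>
    mul_ne_zero (ENNReal.toReal_ne_zero.mpr ⟨((jointReal_ne_zero_iff w s hpw z).mp hz).1,
        ENNReal.ne_top_of_sum_eq_one hpw _⟩)
      (ENNReal.toReal_ne_zero.mpr ⟨outDistW_ne_zero w s hz,
        ENNReal.ne_top_of_sum_eq_one (sum_outDistW w pw n s hpw) _⟩)
  -- where `μ z ≠ 0`, `W / q = μ / ν`, so Gibbs' inequality applies on `A`
  have hterm : ∀ z, μ z * densRate w pw n s z = 1 / (n : ℝ) * (μ z * Real.log (μ z / ν z)) := by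
    intro z
    rcases eq_or_ne (pw n z.1).toReal 0 with h | h
    · simp [μ, jointReal, ENNReal.toReal_mul, h]
    · simp only [μ, ν, jointReal, densRate, ENNReal.toReal_mul, mul_div_mul_left _ _ h]
      ring
  have hμA : 0 ≤ ∑ z with z ∈ A, μ z := sum_nonneg fun z _ => jointReal_nonneg w pw n s z
  have hνA : ∑ z with z ∈ A, ν z ≤ 1 :=
    hν ▸ sum_le_sum_of_subset_of_nonneg (subset_univ _) fun z _ _ => hν_nonneg z
  simp only [Set.indicator_apply, ← sum_filter, hterm, ← mul_sum]
  calc -(1 / (n : ℝ)) ≤ 1 / (n : ℝ) * (∑ z with z ∈ A, μ z - ∑ z with z ∈ A, ν z) := by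
        have : (0 : ℝ) ≤ 1 / n := by positivity
        nlinarith
    _ ≤ _ := mul_le_mul_of_nonneg_left (sum_sub_sum_le_sum_mul_log_div _
        (jointReal_nonneg w pw n s) hν_nonneg hsupp) (by positivity)

theorem eventually_forall_le_of_tendsto_iSup_ofReal {ι : Type*} {g : ℕ → ι → ℝ}
    (h : Tendsto (fun n => ⨆ i, ENNReal.ofReal (g n i)) atTop (𝓝 0)) {η : ℝ} (hη : 0 < η) :
    ∀ᶠ n in atTop, ∀ i, g n i ≤ η :=
  (ENNReal.tendsto_nhds_zero.mp h _ (ENNReal.ofReal_pos.mpr hη)).mono fun n hn i =>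
    (ENNReal.ofReal_le_ofReal_iff hη.le).mp
      ((le_iSup (fun i => ENNReal.ofReal (g n i)) i).trans hn)

section Limits

variable (w : ℕ → S → 𝒳 → PMF 𝒴) (p : ∀ n : ℕ, PMF (Fin n → 𝒳))

theorem mem_cinfISetW_iff {pw : ∀ n : ℕ, (Fin n → 𝒳) → ℝ≥0∞} (hpw : ∀ n, ∑ x, pw n x = 1)
    {R : ℝ} : R ∈ cinfISetW w pw ↔ Tendsto (fun n => ⨆ s,
      ENNReal.ofReal (probReal w pw n s {z | densRate w pw n s z ≤ R})) atTop (𝓝 0) := by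
  simp only [cinfISetW, Set.mem_ofPred_eq, probEventW_eq_ofReal w _ (hpw _)]

theorem sub_sub_mul_probReal_le_expW_densRate {pw : ∀ n : ℕ, (Fin n → 𝒳) → ℝ≥0∞} {n : ℕ}
    (s : S) (hpw : ∑ x, pw n x = 1) (R : ℝ) :
    R - 1 / (n : ℝ) - |R| * probReal w pw n s {z | densRate w pw n s z ≤ R} ≤
      expW w pw n s (densRate w pw n s) := by
  have hdecomp := sum_indicator_mul_add_mul_le_sum_mul (jointReal_nonneg w pw n s)
    (densRate w pw n s) R
  rw [sum_indicator_compl, sum_jointReal w s hpw, mul_sub, mul_one] at hdecomp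
  have htail := neg_one_div_le_sum_indicator_mul_densRate w s hpw {z | densRate w pw n s z ≤ R}
  have habs := mul_le_mul_of_nonneg_right (le_abs_self R)
    (sum_nonneg fun z _ => Set.indicator_nonneg (fun z _ => jointReal_nonneg w pw n s z) z :
      0 ≤ probReal w pw n s {z | densRate w pw n s z ≤ R})
  rw [expW_eq_sum_jointReal]
  unfold probReal at habs ⊢
  linarith

theorem sq_mul_probReal_le_varTilde {n : ℕ} {s : S} {δ : ℝ} (hδ : 0 ≤ δ)
    {E : Set ((Fin n → 𝒳) × (Fin n → 𝒴))}
    (hE : ∀ z ∈ E, δ ≤ |densRate w (fun m => ptilde p m) n s z - meanIsym w p n s|) :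
    δ ^ 2 * probReal w (fun m => ptilde p m) n s E ≤ varTilde w p n s := by
  rw [varTilde, expW_densRate_ptilde]
  exact sq_mul_sum_indicator_le_sum_mul_sq (jointReal_nonneg w _ n s) hδ hE

theorem infMeanIsym_nonneg (n : ℕ) : 0 ≤ infMeanIsym w p n :=
  Real.iInf_nonneg fun s => meanIsym_nonneg w p n s

theorem infMeanIsym_le_meanIsym (n : ℕ) (s : S) : infMeanIsym w p n ≤ meanIsym w p n s :=
  ciInf_le ⟨0, Set.forall_mem_range.mpr fun s => meanIsym_nonneg w p n s⟩ s

theorem isBoundedUnder_ge_infMeanIsym : IsBoundedUnder (· ≥ ·) atTop (infMeanIsym w p) :=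
  isBoundedUnder_of ⟨0, infMeanIsym_nonneg w p⟩

theorem mem_cinfISetW_ptilde_of_lt_liminf
    (hvar : Tendsto (fun n => ⨆ s : S, ENNReal.ofReal (varTilde w p n s)) atTop (𝓝 0))
    {R : ℝ} (hR : R < liminf (infMeanIsym w p) atTop) :
    R ∈ cinfISetW w (fun n => ptilde p n) := by
  obtain ⟨δ, hδ, hRδ⟩ : ∃ δ > 0, R + δ < liminf (infMeanIsym w p) atTop :=
    ⟨(liminf (infMeanIsym w p) atTop - R) / 2, by linarith, by linarith⟩
  have hlim : Tendsto (fun n => (⨆ s, ENNReal.ofReal (varTilde w p n s)) /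
      ENNReal.ofReal (δ ^ 2)) atTop (𝓝 0) := by
    simpa using ENNReal.Tendsto.div_const hvar (Or.inr (by positivity))
  rw [mem_cinfISetW_iff w fun n => sum_ptilde p n]
  refine tendsto_of_tendsto_of_tendsto_of_le_of_le' tendsto_const_nhds hlim
    (Eventually.of_forall fun _ => zero_le) ?_
  filter_upwards [eventually_lt_of_lt_liminf hRδ (isBoundedUnder_ge_infMeanIsym w p)] with n hn
  refine iSup_le fun s => ?_
  have hE : ∀ z ∈ {z | densRate w (fun m => ptilde p m) n s z ≤ R},
      δ ≤ |densRate w (fun m => ptilde p m) n s z - meanIsym w p n s| := fun z hz => by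
    have := infMeanIsym_le_meanIsym w p n s
    rw [abs_sub_comm]
    exact le_abs.mpr (Or.inl (by rw [Set.mem_ofPred_eq] at hz; linarith))
  have hcheb := sq_mul_probReal_le_varTilde w p (by positivity) hE
  calc ENNReal.ofReal (probReal w (fun m => ptilde p m) n s _)
      ≤ ENNReal.ofReal (varTilde w p n s / δ ^ 2) :=
        ENNReal.ofReal_le_ofReal ((le_div_iff₀' (by positivity)).mpr hcheb)
    _ = ENNReal.ofReal (varTilde w p n s) / ENNReal.ofReal (δ ^ 2) :=
        ENNReal.ofReal_div_of_pos (by positivity)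
    _ ≤ _ := ENNReal.div_le_div_right (le_iSup (fun s => ENNReal.ofReal (varTilde w p n s)) s) _

variable [Nonempty S]

theorem isCoboundedUnder_ge_infMeanIsym : IsCoboundedUnder (· ≥ ·) atTop (infMeanIsym w p) :=
  (isBoundedUnder_of ⟨_, fun n => (infMeanIsym_le_meanIsym w p n (Classical.arbitrary S)).trans
    (meanIsym_le_card w p n _)⟩).isCoboundedUnder_ge

theorem liminf_infMeanIsym_nonneg : 0 ≤ liminf (infMeanIsym w p) atTop :=
  le_liminf_of_le (isCoboundedUnder_ge_infMeanIsym w p)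
    (Eventually.of_forall (infMeanIsym_nonneg w p))

theorem le_liminf_of_mem_cinfISetW_ptilde
    (hvar : Tendsto (fun n => ⨆ s : S, ENNReal.ofReal (varTilde w p n s)) atTop (𝓝 0))
    {R : ℝ} (hR : R ∈ cinfISetW w (fun n => ptilde p n)) :
    R ≤ liminf (infMeanIsym w p) atTop := by
  by_contra! hlt
  obtain ⟨δ, hδ, hRδ⟩ : ∃ δ > 0, liminf (infMeanIsym w p) atTop < R - δ :=
    ⟨(R - liminf (infMeanIsym w p) atTop) / 2, by linarith, by linarith⟩
  rw [mem_cinfISetW_iff w fun n => sum_ptilde p n] at hR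
  obtain ⟨n, hn, hvar_n, hR_n⟩ :=
    ((frequently_lt_of_liminf_lt (isCoboundedUnder_ge_infMeanIsym w p) hRδ).and_eventually
      ((eventually_forall_le_of_tendsto_iSup_ofReal hvar (η := δ ^ 2 / 2) (by positivity)).and
        (eventually_forall_le_of_tendsto_iSup_ofReal hR (η := 1 / 4) (by norm_num)))).exists
  obtain ⟨s, hs⟩ := exists_lt_of_ciInf_lt hn
  have hE : ∀ z ∈ {z | densRate w (fun m => ptilde p m) n s z ≤ R}ᶜ,
      δ ≤ |densRate w (fun m => ptilde p m) n s z - meanIsym w p n s| := fun z hz =>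
    le_abs.mpr (Or.inl (by rw [Set.mem_compl_iff, Set.mem_ofPred_eq] at hz; linarith))
  have hcheb := sq_mul_probReal_le_varTilde w p hδ.le hE
  rw [probReal, sum_indicator_compl, sum_jointReal w s (sum_ptilde p n)] at hcheb
  have hP := mul_le_mul_of_nonneg_left (hR_n s) (sq_nonneg δ)
  unfold probReal at hP
  nlinarith [hvar_n s, pow_pos hδ 2]

theorem le_liminf_of_mem_cinfISetW {R : ℝ} (hR : R ∈ cinfISetW w (fun n x => p n x)) :
    R ≤ liminf (infMeanIsym w p) atTop := by
  rw [mem_cinfISetW_iff w fun n => PMF.sum_coe_eq_one _] at hR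
  refine le_of_forall_sub_le fun ε hε => le_liminf_of_le (isCoboundedUnder_ge_infMeanIsym w p) ?_
  set η := ε / (2 * (|R| + 1))
  have hRη : |R| * η ≤ ε / 2 := by
    calc |R| * η ≤ (|R| + 1) * η := by gcongr; linarith
      _ = ε / 2 := by
        simp only [η]
        field_simp
  filter_upwards [eventually_forall_le_of_tendsto_iSup_ofReal hR (η := η) (by positivity),
    tendsto_one_div_atTop_nhds_zero_nat.eventually (gt_mem_nhds (half_pos hε))] with n hP hn
  refine le_ciInf fun s => ?_
  calc R - ε ≤ R - 1 / (n : ℝ) - |R| * probReal w (fun m x => p m x) n s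
        {z | densRate w (fun m x => p m x) n s z ≤ R} := by
        nlinarith [mul_le_mul_of_nonneg_left (hP s) (abs_nonneg R)]
    _ ≤ expW w (fun m x => p m x) n s (densRate w (fun m x => p m x) n s) :=
        sub_sub_mul_probReal_le_expW_densRate w s (PMF.sum_coe_eq_one _) R
    _ ≤ meanIsym w p n s := expW_densRate_le_meanIsym w p s

theorem cinfIW_ptilde_eq_liminf
    (hvar : Tendsto (fun n => ⨆ s : S, ENNReal.ofReal (varTilde w p n s)) atTop (𝓝 0)) :
    cinfIW w (fun n => ptilde p n) = liminf (infMeanIsym w p) atTop :=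
  csSup_eq_of_forall_le_of_forall_lt_exists_gt
    ⟨_, mem_cinfISetW_ptilde_of_lt_liminf w p hvar (sub_one_lt _)⟩
    (fun _ hR => le_liminf_of_mem_cinfISetW_ptilde w p hvar hR)
    (fun R hR => ⟨(R + liminf (infMeanIsym w p) atTop) / 2,
      mem_cinfISetW_ptilde_of_lt_liminf w p hvar (by linarith), by linarith⟩)

end Limits

theorem independent_inputs_optimal_general {S 𝒳 𝒴 : Type*} [Nonempty S]
    [Fintype 𝒳] [Fintype 𝒴]
    (w : ℕ → S → 𝒳 → PMF 𝒴) (p : ∀ n : ℕ, PMF (Fin n → 𝒳))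
    (hvar : Tendsto (fun n => ⨆ s : S, ENNReal.ofReal (varTilde w p n s))
      atTop (nhds 0)) :
    cinfIW w (fun n x => p n x) ≤ cinfIW w (fun n => ptilde p n) ∧
    cinfIW w (fun n => ptilde p n) =
      Filter.liminf (fun n : ℕ => ⨅ s : S, (1 / (n : ℝ)) * ∑ k : Fin n, Isym w p n k s)
        atTop := by
  rw [cinfIW_ptilde_eq_liminf w p hvar]
  -- `Real.sSup_le` also covers an empty rate set, whose `sSup` is the junk value `0`
  exact ⟨Real.sSup_le (fun R hR => le_liminf_of_mem_cinfISetW w p hR)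
    (liminf_infMeanIsym_nonneg w p), rfl⟩

/-- optimality of independent inputs for compound memoryless channels: if
the variance of the information density rate under the independent-symbols input `p̃`
satisfies `sup_s σ²_{n,s} → 0`, then (assuming the compound quantities are finite)
`cinf I(X;Y) ≤ cinf I(X̃;Ỹ)` and
`cinf I(X̃;Ỹ) = liminf_n inf_s (1/n)·Σ_{k} I(X̃_k;Ỹ_k|s)`. -/
theorem independent_inputs_optimal {S 𝒳 𝒴 : Type*} [Nonempty S]
    [Fintype 𝒳] [Nonempty 𝒳] [Fintype 𝒴] [Nonempty 𝒴]
    (w : ℕ → S → 𝒳 → PMF 𝒴) (p : ∀ n : ℕ, PMF (Fin n → 𝒳))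
    (hvar : Tendsto (fun n => ⨆ s : S, ENNReal.ofReal (varTilde w p n s))
      atTop (nhds 0))
    (hfin₁ : (cinfISetW w (fun n x => p n x)).Nonempty)
    (hfin₂ : BddAbove (cinfISetW w (fun n x => p n x)))
    (hfin₃ : (cinfISetW w (fun n => ptilde p n)).Nonempty)
    (hfin₄ : BddAbove (cinfISetW w (fun n => ptilde p n))) :
    cinfIW w (fun n x => p n x) ≤ cinfIW w (fun n => ptilde p n) ∧
    cinfIW w (fun n => ptilde p n) =
      Filter.liminf (fun n : ℕ => ⨅ s : S, (1 / (n : ℝ)) * ∑ k : Fin n, Isym w p n k s)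
        atTop :=
  independent_inputs_optimal_general w p hvar
end
end

section
/- Ordering of compound information rates: let Z be a compound random sequence with nonempty state set S, and assume that cinf(Z), wsup(Z), inf_{s∈S} psup(Z,s), sup_{s∈S} psup(Z,s), and csup(Z) are all finite. Then cinf(Z) ≤ wsup(Z) ≤ inf_{s∈S} psup(Z,s) ≤ sup_{s∈S} psup(Z,s) ≤ csup(Z). -/
open Filter MeasureTheory

noncomputable section

/-- The set whose infimum is the compound supremum `csup`. -/
def csupSet {S : Type*} (μ : ℕ → S → Measure ℝ) : Set ℝ :=
  {R : ℝ | Tendsto (fun n => ⨆ s : S, μ n s {x : ℝ | R ≤ x}) atTop (nhds 0)}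

/-- The compound supremum. -/
def csup {S : Type*} (μ : ℕ → S → Measure ℝ) : ℝ := sInf (csupSet μ)

/-- The set whose infimum is the per-state sup-limit `psup` of state `s`. -/
def psupSet {S : Type*} (μ : ℕ → S → Measure ℝ) (s : S) : Set ℝ :=
  {R : ℝ | Tendsto (fun n => μ n s {x : ℝ | R ≤ x}) atTop (nhds 0)}

/-- The per-state sup-limit. -/
def psup {S : Type*} (μ : ℕ → S → Measure ℝ) (s : S) : ℝ := sInf (psupSet μ s)

/-- The set whose infimum is the worst-case sup-limit `wsup`. -/
def wsupSet {S : Type*} (μ : ℕ → S → Measure ℝ) : Set ℝ :=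
  {R : ℝ | Tendsto (fun n => ⨅ s : S, μ n s {x : ℝ | R < x}) atTop (nhds 0)}

/-- The worst-case sup-limit. -/
def wsup {S : Type*} (μ : ℕ → S → Measure ℝ) : ℝ := sInf (wsupSet μ)

/-! Idea: the inclusions `csupSet μ ⊆ psupSet μ s ⊆ wsupSet μ` reverse under `sInf`, which gives
`wsup ≤ psup s ≤ csup` for every state. For `cinf ≤ wsup`, if `R' ≤ R` then every state puts total
mass at least one on `{x ≤ R}` and `{x > R'}`, so the compound probability of the first set plus
the worst-case probability of the second stays at least one and cannot tend to zero. -/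

section

variable {S : Type*} (μ : ℕ → S → Measure ℝ)

theorem one_le_measure_Iic_add_measure_Ioi {α : Type*} [LinearOrder α] [MeasurableSpace α]
    (ν : Measure α) [IsProbabilityMeasure ν] {a b : α} (hab : a ≤ b) :
    1 ≤ ν (Set.Iic b) + ν (Set.Ioi a) :=
  calc (1 : ENNReal) = ν (Set.Iic b ∪ Set.Ioi a) := by rw [Set.Iic_union_Ioi_of_le hab, measure_univ]
    _ ≤ ν (Set.Iic b) + ν (Set.Ioi a) := measure_union_le _ _

theorem lt_of_mem_cinfSet_of_mem_wsupSet (hprob : ∀ n s, IsProbabilityMeasure (μ n s))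
    {R R' : ℝ} (hR : R ∈ cinfSet μ) (hR' : R' ∈ wsupSet μ) : R < R' := by
  by_contra! hle
  have hcover : ∀ n, 1 ≤ (⨆ s, μ n s (Set.Iic R)) + ⨅ s, μ n s (Set.Ioi R') := fun n => by
    rw [ENNReal.add_iInf]
    exact le_iInf fun s => (one_le_measure_Iic_add_measure_Ioi (μ n s) hle).trans
      (add_le_add_left (le_iSup (fun s => μ n s (Set.Iic R)) s) _)
  have hzero := ge_of_tendsto' (add_zero (0 : ENNReal) ▸ hR.add hR') hcover
  exact one_ne_zero (le_zero_iff.mp hzero)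

theorem psupSet_subset_wsupSet (s : S) : psupSet μ s ⊆ wsupSet μ := fun _ hR =>
  tendsto_of_tendsto_of_tendsto_of_le_of_le tendsto_const_nhds hR (fun _ => zero_le)
    fun _ => (iInf_le _ s).trans (measure_mono Set.Ioi_subset_Ici_self)

theorem csupSet_subset_psupSet (s : S) : csupSet μ ⊆ psupSet μ s := fun _ hR =>
  tendsto_of_tendsto_of_tendsto_of_le_of_le tendsto_const_nhds hR (fun _ => zero_le)
    fun n => le_iSup (fun s => μ n s _) s

end

theorem compound_rates_ordering_general {S : Type*} [Nonempty S] (μ : ℕ → S → Measure ℝ)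
    (hprob : ∀ n s, IsProbabilityMeasure (μ n s))
    (hc₁ : (cinfSet μ).Nonempty)
    (hw₂ : BddBelow (wsupSet μ))
    (hs₁ : (csupSet μ).Nonempty) :
    cinf μ ≤ wsup μ ∧ wsup μ ≤ (⨅ s : S, psup μ s) ∧
      (⨅ s : S, psup μ s) ≤ (⨆ s : S, psup μ s) ∧ (⨆ s : S, psup μ s) ≤ csup μ := by
  obtain ⟨s₀⟩ := ‹Nonempty S›
  have hpsup_nonempty (s : S) : (psupSet μ s).Nonempty := hs₁.mono (csupSet_subset_psupSet μ s)
  have hwsup_nonempty : (wsupSet μ).Nonempty :=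
    (hpsup_nonempty s₀).mono (psupSet_subset_wsupSet μ s₀)
  have wsup_le_psup (s : S) : wsup μ ≤ psup μ s :=
    csInf_le_csInf hw₂ (hpsup_nonempty s) (psupSet_subset_wsupSet μ s)
  have psup_le_csup (s : S) : psup μ s ≤ csup μ :=
    csInf_le_csInf (hw₂.mono (psupSet_subset_wsupSet μ s)) hs₁ (csupSet_subset_psupSet μ s)
  refine ⟨?_, le_ciInf wsup_le_psup, ?_, ciSup_le psup_le_csup⟩
  · exact csSup_le hc₁ fun R hR => le_csInf hwsup_nonempty fun R' hR' =>
      (lt_of_mem_cinfSet_of_mem_wsupSet μ hprob hR hR').le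
  · exact (ciInf_le ⟨wsup μ, Set.forall_mem_range.2 wsup_le_psup⟩ s₀).trans
      (le_ciSup ⟨csup μ, Set.forall_mem_range.2 psup_le_csup⟩ s₀)

/-- ordering of the compound information rates:
`cinf(Z) ≤ wsup(Z) ≤ inf_s psup(Z,s) ≤ sup_s psup(Z,s) ≤ csup(Z)`,
assuming all these quantities are finite. -/
theorem compound_rates_ordering {S : Type*} [Nonempty S] (μ : ℕ → S → Measure ℝ)
    (hprob : ∀ n s, IsProbabilityMeasure (μ n s))
    (hc₁ : (cinfSet μ).Nonempty) (hc₂ : BddAbove (cinfSet μ))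
    (hw₁ : (wsupSet μ).Nonempty) (hw₂ : BddBelow (wsupSet μ))
    (hp₁ : ∀ s, (psupSet μ s).Nonempty) (hp₂ : ∀ s, BddBelow (psupSet μ s))
    (hp₃ : BddBelow (Set.range fun s => psup μ s))
    (hp₄ : BddAbove (Set.range fun s => psup μ s))
    (hs₁ : (csupSet μ).Nonempty) (hs₂ : BddBelow (csupSet μ)) :
    cinf μ ≤ wsup μ ∧ wsup μ ≤ (⨅ s : S, psup μ s) ∧
      (⨅ s : S, psup μ s) ≤ (⨆ s : S, psup μ s) ∧ (⨆ s : S, psup μ s) ≤ csup μ :=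
  compound_rates_ordering_general μ hprob hc₁ hw₂ hs₁

end
end
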